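/- Let R ∈ ℝ^m and S ∈ ℝ^n be nonnegative real vectors with equal component sums. There exists an m×n nonnegative real matrix A with row sum vector R and column sum vector S satisfying r_∞ A = A (i.e. a_{i,j} = a_{i, n+1−j} for all i,j) if and only if S is palindromic. -/

import Mathlib

/-!
Mirror symmetry of `A` makes column `j` and column `j.rev` equal, so their sums agree and `S` is
palindromic. Conversely, the product coupling `a_{ij} = R_i S_j / ∑ S` has margins `R` and `S` and
inherits every symmetry of `S`.
-/

open Finset

section ProductCoupling

variable {ι κ : Type*} [Fintype κ]

noncomputable def productCoupling (R : ι → ℝ) (S : κ → ℝ) : Matrix ι κ ℝ :=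
  Matrix.of fun i j => R i * S j / ∑ j, S j

theorem productCoupling_nonneg {R : ι → ℝ} {S : κ → ℝ} (hR : ∀ i, 0 ≤ R i) (hS : ∀ j, 0 ≤ S j)
    (i : ι) (j : κ) : 0 ≤ productCoupling R S i j :=
  div_nonneg (mul_nonneg (hR i) (hS j)) (sum_nonneg fun j _ => hS j)

-- When `∑ S = 0` the division is junk, but then both margins vanish by nonnegativity.
theorem productCoupling_row_sum [Fintype ι] {R : ι → ℝ} {S : κ → ℝ} (hR : ∀ i, 0 ≤ R i)
    (hsum : ∑ i, R i = ∑ j, S j) (i : ι) : ∑ j, productCoupling R S i j = R i := by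
  simp only [productCoupling, Matrix.of_apply, ← sum_div, ← mul_sum]
  refine mul_div_cancel_of_imp fun hT => ?_
  exact (sum_eq_zero_iff_of_nonneg fun i _ => hR i).mp (hsum.trans hT) i (mem_univ i)

theorem productCoupling_col_sum [Fintype ι] {R : ι → ℝ} {S : κ → ℝ} (hS : ∀ j, 0 ≤ S j)
    (hsum : ∑ i, R i = ∑ j, S j) (j : κ) : ∑ i, productCoupling R S i j = S j := by
  simp only [productCoupling, Matrix.of_apply, ← sum_div, ← sum_mul, hsum]
  refine mul_div_cancel_left_of_imp fun hT => ?_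
  exact (sum_eq_zero_iff_of_nonneg fun j _ => hS j).mp hT j (mem_univ j)

theorem productCoupling_comp_col {R : ι → ℝ} {S : κ → ℝ} {σ : κ → κ} (hσ : ∀ j, S j = S (σ j))
    (i : ι) (j : κ) : productCoupling R S i j = productCoupling R S i (σ j) := by
  simp only [productCoupling, Matrix.of_apply, ← hσ j]

end ProductCoupling

theorem vertical_mirror_transportation (m n : ℕ) (R : Fin m → ℝ) (S : Fin n → ℝ)
    (hR : ∀ i, 0 ≤ R i) (hS : ∀ j, 0 ≤ S j)
    (hsum : ∑ i, R i = ∑ j, S j) :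
    (∃ A : Matrix (Fin m) (Fin n) ℝ,
        (∀ i j, 0 ≤ A i j) ∧
        (∀ i, ∑ j, A i j = R i) ∧
        (∀ j, ∑ i, A i j = S j) ∧
        (∀ i j, A i j = A i j.rev)) ↔
      (∀ j, S j = S j.rev) := by
  constructor
  · rintro ⟨A, -, -, hcol, hmirror⟩ j
    rw [← hcol j, ← hcol j.rev]
    exact sum_congr rfl fun i _ => hmirror i j
  · intro hpal
    exact ⟨productCoupling R S, productCoupling_nonneg hR hS, productCoupling_row_sum hR hsum,
      productCoupling_col_sum hS hsum, productCoupling_comp_col hpal⟩
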